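/- Let G be a finite simple graph, g,f:V(G)→ℤ⁺ with g(x)≤f(x) for all x, and H a subgraph of G. If G admits all fractional (g,f)-factors excluding H, then for every subset S⊆V(G), setting T={x∈V(G)∖S : d_{G−S}(x)−d_H(x)+e_H(x,S)<f(x)}, one has g(S)+∑_{x∈T} d_{G−S}(x)−f(T) ≥ ∑_{x∈T} d_H(x)−e_H(S,T). -/

import Mathlib

/-!
Take `r = g` on `S` and `r = f` off `S`, and let `h` be a fractional `r`-factor of `G - E(H)`.
The `h`-degree `f(x)` of a vertex `x ∈ T` splits into the weight it sends into `S`, which over all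
of `T` is at most `g(S)`, and the weight it sends outside `S`, which is at most its number of
`(G - E(H))`-neighbours outside `S`, namely `d_{G-S}(x) - d_H(x) + e_H(x, S)` since `H ≤ G`.
-/

open Finset

/-- `h` is an indicator function of a fractional `r`-factor of `G`:
a symmetric edge-weighting with values in `[0,1]`, supported on edges of `G`,
whose weighted degree at each vertex `x` equals `r x`. -/
def IsFracFactor {V : Type*} [Fintype V] (G : SimpleGraph V) (r : V → ℕ)
    (h : V → V → ℝ) : Prop :=
  (∀ x y, h x y = h y x) ∧ (∀ x y, 0 ≤ h x y ∧ h x y ≤ 1) ∧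
  (∀ x y, ¬ G.Adj x y → h x y = 0) ∧ ∀ x : V, ∑ y : V, h x y = (r x : ℝ)

/-- `G` has a fractional `r`-factor. -/
def HasFracFactor {V : Type*} [Fintype V] (G : SimpleGraph V) (r : V → ℕ) : Prop :=
  ∃ h, IsFracFactor G r h

/-- `G` has all fractional `(g,f)`-factors excluding `H`: for every integer-valued
`r` with `g ≤ r ≤ f` pointwise, `G - E(H)` has a fractional `r`-factor. -/
def HasAllFracExcl {V : Type*} [Fintype V] (G H : SimpleGraph V) (g f : V → ℕ) : Prop :=
  ∀ r : V → ℕ, (∀ x, g x ≤ r x ∧ r x ≤ f x) → HasFracFactor (G \ H) r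

/-- `G` has all fractional `(g,f)`-factors. -/
def HasAllFrac {V : Type*} [Fintype V] (G : SimpleGraph V) (g f : V → ℕ) : Prop :=
  ∀ r : V → ℕ, (∀ x, g x ≤ r x ∧ r x ≤ f x) → HasFracFactor G r

/-- Degree of `x` in the induced subgraph `G - S`. -/
def degOut {V : Type*} [Fintype V] [DecidableEq V] (G : SimpleGraph V)
    [DecidableRel G.Adj] (S : Finset V) (x : V) : ℕ :=
  (Sᶜ.filter fun y => G.Adj x y).card

/-- Number of edges of `G` with one end in `S` and the other in `T`
(for disjoint `S`, `T`). -/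
def eBtw {V : Type*} [Fintype V] [DecidableEq V] (G : SimpleGraph V)
    [DecidableRel G.Adj] (S T : Finset V) : ℕ :=
  ∑ x ∈ S, (T.filter fun y => G.Adj x y).card

section

variable {V : Type*} [Fintype V]

namespace IsFracFactor

variable {G : SimpleGraph V} {r : V → ℕ} {h : V → V → ℝ}

lemma sum_sum_le (hh : IsFracFactor G r h) (S T : Finset V) :
    ∑ x ∈ T, ∑ y ∈ S, h x y ≤ ∑ y ∈ S, (r y : ℝ) := by
  obtain ⟨hsym, hbd, -, hdeg⟩ := hh
  rw [sum_comm]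
  refine sum_le_sum fun y _ => ?_
  calc ∑ x ∈ T, h x y = ∑ x ∈ T, h y x := sum_congr rfl fun x _ => hsym x y
    _ ≤ ∑ x, h y x := sum_le_sum_of_subset_of_nonneg (subset_univ T) fun x _ _ => (hbd y x).1
    _ = r y := hdeg y

lemma sum_le_degOut [DecidableEq V] [DecidableRel G.Adj] (hh : IsFracFactor G r h)
    (S : Finset V) (x : V) :
    ∑ y ∈ Sᶜ, h x y ≤ degOut G S x := by
  obtain ⟨-, hbd, hsupp, -⟩ := hh
  rw [degOut, card_filter, Nat.cast_sum]
  refine sum_le_sum fun y _ => ?_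
  by_cases hxy : G.Adj x y
  · simpa [hxy] using (hbd x y).2
  · simp [hxy, hsupp x y hxy]

end IsFracFactor

variable [DecidableEq V]

lemma eBtw_comm (G : SimpleGraph V) [DecidableRel G.Adj] (S T : Finset V) :
    eBtw G S T = eBtw G T S := by
  simp only [eBtw, card_filter]
  rw [sum_comm]
  exact sum_congr rfl fun _ _ => sum_congr rfl fun _ _ => by simp only [G.adj_comm]

lemma card_filter_adj_add_degOut (G : SimpleGraph V) [DecidableRel G.Adj] (S : Finset V) (x : V) :
    #{y ∈ S | G.Adj x y} + degOut G S x = G.degree x := by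
  rw [degOut, ← card_union_of_disjoint (disjoint_filter_filter disjoint_compl_right),
    ← filter_union, union_compl, ← G.neighborFinset_eq_filter, G.card_neighborFinset_eq_degree]

lemma degOut_sdiff_add_degOut {G H : SimpleGraph V} [DecidableRel G.Adj] [DecidableRel H.Adj]
    (hHG : H ≤ G) (S : Finset V) (x : V) :
    degOut (G \ H) S x + degOut H S x = degOut G S x := by
  rw [degOut, degOut, degOut, ← card_union_of_disjoint]
  · congr 1
    ext y
    simp only [mem_union, mem_filter, SimpleGraph.sdiff_adj]
    by_cases hH : H.Adj x y
    · simp [hH, hHG hH]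
    · simp [hH]
  · exact disjoint_filter.2 fun _ _ hGH hH => hGH.2 hH

lemma HasFracFactor.sum_le_sum_add_sum_degOut {G : SimpleGraph V} [DecidableRel G.Adj]
    {r : V → ℕ} (hG : HasFracFactor G r) (S T : Finset V) :
    ∑ x ∈ T, r x ≤ ∑ y ∈ S, r y + ∑ x ∈ T, degOut G S x := by
  obtain ⟨h, hh⟩ := hG
  have hsplit : ∀ x, (r x : ℝ) = ∑ y ∈ S, h x y + ∑ y ∈ Sᶜ, h x y := fun x => by
    rw [sum_add_sum_compl, hh.2.2.2 x]
  have hreal : ∑ x ∈ T, (r x : ℝ) ≤ ∑ y ∈ S, (r y : ℝ) + ∑ x ∈ T, (degOut G S x : ℝ) := by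
    rw [sum_congr rfl fun x _ => hsplit x, sum_add_distrib]
    exact add_le_add (hh.sum_sum_le S T) (sum_le_sum fun x _ => hh.sum_le_degOut S x)
  exact_mod_cast hreal

end

theorem stmt1_general {V : Type*} [Fintype V] [DecidableEq V] (G H : SimpleGraph V)
    [DecidableRel G.Adj] [DecidableRel H.Adj]
    (g f : V → ℕ) (hgf : ∀ x, g x ≤ f x) (hHG : H ≤ G)
    (hall : HasAllFracExcl G H g f) :
    ∀ S T : Finset V,
      T = Sᶜ.filter (fun x =>
        (degOut G S x : ℤ) - H.degree x + eBtw H {x} S < f x) →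
      (∑ x ∈ S, (g x : ℤ)) + ∑ x ∈ T, (degOut G S x : ℤ) - ∑ x ∈ T, (f x : ℤ)
        ≥ ∑ x ∈ T, (H.degree x : ℤ) - eBtw H S T := by
  intro S T hT
  have hTS : ∀ x ∈ T, x ∉ S := fun x hx => mem_compl.1 (mem_filter.1 (hT ▸ hx)).1
  let r : V → ℕ := fun x => if x ∈ S then g x else f x
  have hr : ∀ x, g x ≤ r x ∧ r x ≤ f x := fun x => by
    by_cases hx : x ∈ S <;> simp [r, hx, hgf x]
  have hfactor := (hall r hr).sum_le_sum_add_sum_degOut S T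
  rw [sum_congr rfl fun x hx => if_neg (hTS x hx), sum_congr rfl fun x hx => if_pos hx]
    at hfactor
  have hdeg : ∀ x, (degOut (G \ H) S x : ℤ) = degOut G S x - H.degree x + #{y ∈ S | H.Adj x y} :=
    fun x => by
      have := degOut_sdiff_add_degOut hHG S x
      have := card_filter_adj_add_degOut H S x
      omega
  have hcount : ∑ x ∈ T, (degOut (G \ H) S x : ℤ)
      = ∑ x ∈ T, (degOut G S x : ℤ) - ∑ x ∈ T, (H.degree x : ℤ) + eBtw H S T := by
    rw [eBtw_comm, eBtw, Nat.cast_sum]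
    simp only [hdeg, sum_add_distrib, sum_sub_distrib]
  zify at hfactor
  linarith

/-- Necessity in Theorem 5: if `G` has all fractional `(g,f)`-factors excluding
`H`, then the deficiency condition holds. -/
theorem stmt1 {V : Type*} [Fintype V] [DecidableEq V] (G H : SimpleGraph V)
    [DecidableRel G.Adj] [DecidableRel H.Adj]
    (g f : V → ℕ) (hg : ∀ x, 1 ≤ g x) (hgf : ∀ x, g x ≤ f x) (hHG : H ≤ G)
    (hall : HasAllFracExcl G H g f) :
    ∀ S T : Finset V,
      T = Sᶜ.filter (fun x =>
        (degOut G S x : ℤ) - H.degree x + eBtw H {x} S < f x) →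
      (∑ x ∈ S, (g x : ℤ)) + ∑ x ∈ T, (degOut G S x : ℤ) - ∑ x ∈ T, (f x : ℤ)
        ≥ ∑ x ∈ T, (H.degree x : ℤ) - eBtw H S T :=
  stmt1_general G H g f hgf hHG hall
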